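/- arXiv:math/0301179 — 2 statements merged into one kernel-verified Lean document; each statement's English description precedes it below -/
import Mathlib

section
/- With the setup 𝔽_p(θ) = 𝔽_p[x]/(x^r - a) (r prime, r ∣ p-1, a not an r-th power): if m₁, m₂ are positive integers with a^{m₁} = a^{m₂} = a in 𝔽_p and θ^{m₁} = θ^{m₂} (i.e., σ_{m₁} = σ_{m₂} as automorphisms), then the order of the subgroup G_{m₁} ∩ G_{m₂} divides m₁ - m₂. -/
/-! Since `x^r - a` is irreducible, `𝔽_p(θ)` is a finite field, and for `a^m = a` the substitution
`σ_m` is a ring endomorphism, so `G_m` is the group of units `u` with `σ_m u = u^m`. When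
`σ_{m₁} = σ_{m₂}`, every element of the finite, hence cyclic, group `G_{m₁} ∩ G_{m₂}` satisfies
`u^{m₁} = u^{m₂}`; so the exponent of this group, which for a cyclic group is its order, divides
`m₁ - m₂`. -/

open Polynomial

/-- The set `G_m = { f(θ) ∈ 𝔽_p(θ)^* : f(θ^m) = f(θ)^m }` inside
`𝔽_p(θ) = 𝔽_p[x]/(x^r - a)`. -/
def Gset (p r : ℕ) (a : ZMod p) (m : ℕ) : Set (AdjoinRoot (X ^ r - C a)) :=
  {u | u ≠ 0 ∧ ∀ f : Polynomial (ZMod p),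
    Polynomial.aeval (AdjoinRoot.root (X ^ r - C a)) f = u →
    Polynomial.aeval ((AdjoinRoot.root (X ^ r - C a)) ^ m) f = u ^ m}

theorem IsCyclic.card_dvd_sub_of_forall_pow_eq_pow {G : Type*} [Group G] [IsCyclic G]
    {m₁ m₂ : ℕ} (h : ∀ g : G, g ^ m₁ = g ^ m₂) : (Nat.card G : ℤ) ∣ (m₁ : ℤ) - (m₂ : ℤ) := by
  rw [← IsCyclic.exponent_eq_card, Group.exponent_dvd_sub_iff_zpow_eq_zpow]
  simpa only [zpow_natCast] using h

section PowEqSubgroup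

variable {M : Type*} [CommMonoid M]

def powEqSubgroup (σ : M →* M) (m : ℕ) : Subgroup Mˣ :=
  (Units.map σ).eqLocus (powMonoidHom m)

theorem mem_powEqSubgroup {σ : M →* M} {m : ℕ} {x : Mˣ} :
    x ∈ powEqSubgroup σ m ↔ σ x = (x : M) ^ m := by
  change Units.map σ x = x ^ m ↔ _
  rw [Units.ext_iff, Units.coe_map, Units.val_pow_eq_pow_val]

theorem pow_eq_pow_of_mem_powEqSubgroup_inf {σ : M →* M} {m₁ m₂ : ℕ} {x : Mˣ}
    (hx : x ∈ powEqSubgroup σ m₁ ⊓ powEqSubgroup σ m₂) : x ^ m₁ = x ^ m₂ := by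
  rw [Subgroup.mem_inf, mem_powEqSubgroup, mem_powEqSubgroup] at hx
  exact Units.ext (by push_cast; rw [← hx.1, hx.2])

theorem card_powEqSubgroup_inf_dvd_sub {K : Type*} [CommRing K] [IsDomain K] [Finite K]
    (σ : K →* K) (m₁ m₂ : ℕ) :
    (Nat.card ↥(powEqSubgroup σ m₁ ⊓ powEqSubgroup σ m₂) : ℤ) ∣ (m₁ : ℤ) - (m₂ : ℤ) :=
  IsCyclic.card_dvd_sub_of_forall_pow_eq_pow fun x =>
    Subtype.ext (pow_eq_pow_of_mem_powEqSubgroup_inf x.2)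

end PowEqSubgroup

namespace AdjoinRoot

variable {R : Type*} [CommRing R]

theorem forall_aeval_root_eq_imp_iff {q : R[X]} {y : AdjoinRoot q} (hy : q.eval₂ (of q) y = 0)
    (u v : AdjoinRoot q) :
    (∀ f : R[X], aeval (root q) f = u → aeval y f = v) ↔ lift (of q) y hy u = v := by
  obtain ⟨g, rfl⟩ := mk_surjective u
  refine ⟨fun h => h g (aeval_eq g), fun h f hf => ?_⟩
  rw [aeval_eq] at hf
  rw [← h, ← hf, lift_mk, aeval_def, algebraMap_eq]

theorem root_X_pow_sub_C_pow (a : R) (r : ℕ) : root (X ^ r - C a) ^ r = of _ a := by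
  have h := eval₂_root (X ^ r - C a)
  rwa [eval₂_sub, eval₂_X_pow, eval₂_C, sub_eq_zero] at h

theorem eval₂_root_pow_X_pow_sub_C {a : R} {m : ℕ} (ha : a ^ m = a) (r : ℕ) :
    (X ^ r - C a).eval₂ (of _) (root (X ^ r - C a) ^ m) = 0 := by
  rw [eval₂_sub, eval₂_X_pow, eval₂_C, ← pow_mul, mul_comm, pow_mul, root_X_pow_sub_C_pow,
    ← map_pow, ha, sub_self]

/-- The substitution `σ_m : f(θ) ↦ f(θ^m)`. -/
noncomputable def rootPowHom (a : R) (r : ℕ) {m : ℕ} (ha : a ^ m = a) :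
    AdjoinRoot (X ^ r - C a) →+* AdjoinRoot (X ^ r - C a) :=
  lift (of _) _ (eval₂_root_pow_X_pow_sub_C ha r)

theorem rootPowHom_eq_of_root_pow_eq {a : R} {r m₁ m₂ : ℕ} (h₁ : a ^ m₁ = a) (h₂ : a ^ m₂ = a)
    (h : root (X ^ r - C a) ^ m₁ = root (X ^ r - C a) ^ m₂) :
    rootPowHom a r h₁ = rootPowHom a r h₂ := by
  simp only [rootPowHom, h]

end AdjoinRoot

section Gset

open AdjoinRoot

variable {p r m : ℕ} {a : ZMod p}

theorem mem_Gset_iff (ha : a ^ m = a) {u : AdjoinRoot (X ^ r - C a)} :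
    u ∈ Gset p r a m ↔ u ≠ 0 ∧ rootPowHom a r ha u = u ^ m :=
  and_congr_right fun _ => forall_aeval_root_eq_imp_iff _ u (u ^ m)

variable [Fact p.Prime] [Fact (Irreducible (X ^ r - C a))]

theorem Gset_subset_range_units_val : Gset p r a m ⊆ Set.range Units.val :=
  fun u hu => ⟨Units.mk0 u hu.1, rfl⟩

theorem preimage_units_val_Gset (ha : a ^ m = a) :
    Units.val ⁻¹' Gset p r a m = powEqSubgroup (rootPowHom a r ha).toMonoidHom m := by
  ext x
  simp [mem_Gset_iff ha, mem_powEqSubgroup, x.ne_zero]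

end Gset

theorem card_inter_dvd_sub_general (p r m₁ m₂ : ℕ) [Fact p.Prime] (hr : r.Prime)
    (a : ZMod p) (ha : ¬ ∃ b : ZMod p, b ^ r = a)
    (ham₁ : a ^ m₁ = a) (ham₂ : a ^ m₂ = a)
    (hσ : (AdjoinRoot.root (X ^ r - C a)) ^ m₁ = (AdjoinRoot.root (X ^ r - C a)) ^ m₂) :
    (Nat.card ↥(Gset p r a m₁ ∩ Gset p r a m₂) : ℤ) ∣ (m₁ : ℤ) - (m₂ : ℤ) := by
  have : Fact (Irreducible (X ^ r - C a)) :=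
    ⟨X_pow_sub_C_irreducible_of_prime hr fun b hb => ha ⟨b, hb⟩⟩
  have : Module.Finite (ZMod p) (AdjoinRoot (X ^ r - C a)) :=
    (monic_X_pow_sub_C a hr.ne_zero).finite_adjoinRoot
  have : Finite (AdjoinRoot (X ^ r - C a)) := Module.finite_of_finite (ZMod p)
  rw [← Nat.card_preimage_of_injective Units.val_injective
      (Set.inter_subset_left.trans Gset_subset_range_units_val),
    Set.preimage_inter, preimage_units_val_Gset ham₁, preimage_units_val_Gset ham₂,
    AdjoinRoot.rootPowHom_eq_of_root_pow_eq ham₁ ham₂ hσ, ← Subgroup.coe_inf]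
  exact card_powEqSubgroup_inf_dvd_sub _ m₁ m₂

theorem card_inter_dvd_sub (p r m₁ m₂ : ℕ) [Fact p.Prime] (hr : r.Prime)
    (hrp : r ∣ p - 1) (a : ZMod p) (ha : ¬ ∃ b : ZMod p, b ^ r = a)
    (hm₁ : 0 < m₁) (hm₂ : 0 < m₂) (ham₁ : a ^ m₁ = a) (ham₂ : a ^ m₂ = a)
    (hσ : (AdjoinRoot.root (X ^ r - C a)) ^ m₁ = (AdjoinRoot.root (X ^ r - C a)) ^ m₂) :
    (Nat.card ↥(Gset p r a m₁ ∩ Gset p r a m₂) : ℤ) ∣ (m₁ : ℤ) - (m₂ : ℤ) :=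
  card_inter_dvd_sub_general p r m₁ m₂ hr a ha ham₁ ham₂ hσ
end

section
/- (Main theorem) Let n be a positive integer which is not a perfect power (not of the form m^k with k ≥ 2). Suppose there exists a prime r with r^α || n-1 for some α ≥ 1 and r ≥ (log₂ n)², and an integer 1 < a < n such that a^(r^α) ≡ 1 (mod n), gcd(a^(r^(α-1)) - 1, n) = 1, and (1 + x)^n ≡ 1 + x^n in the ring (ℤ/nℤ)[x]/(x^r - a). Then n is prime. -/
/-!
Take a prime `p ∣ n` with `r ^ (α + 1) ∤ p - 1` and write `n = p * q`. The image `b` of `a` in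
`𝔽_p` has order `r ^ α`, so `b ^ ((p - 1) / r) ≠ 1`: `b` is not an `r`-th power and
`K = 𝔽_p[X] / (X ^ r - b)` is a field. Its root `θ` is introspective for `n`, for `p` (Frobenius)
and hence for `q`, so `(1 + θ) ^ t = 1 + θ ^ t` for all `t = q ^ i * p ^ j`. Every `θ ^ t` is a root
of `X ^ r - b`, so among the `(⌊√r⌋ + 1) ^ 2 > r` exponents with `i, j ≤ ⌊√r⌋` two give the same
`θ ^ t`; unless `q = 1` they are distinct integers in `[1, n ^ ⌊√r⌋]`, and `n ^ ⌊√r⌋ < 2 ^ r`.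
On the other hand, with `ζ = θ ^ (p - 1)` a primitive `r`-th root of unity in `𝔽_p`, the conjugates
`(1 + θ) ^ (p ^ k) = 1 + ζ ^ k * θ` are powers of `1 + θ` whose products over the proper subsets of
`{0, …, r - 1}` are pairwise distinct, so `1 + θ` has order at least `2 ^ r - 1`.
-/

open Polynomial

theorem Nat.exists_prime_dvd_not_dvd_sub_one {n M : ℕ} (hn : n ≠ 0) (h : ¬ M ∣ n - 1) :
    ∃ p, p.Prime ∧ p ∣ n ∧ ¬ M ∣ p - 1 := by
  by_contra! hM
  have key : ∀ m, m ∣ n → m ≡ 1 [MOD M] := by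
    intro m
    induction m using Nat.recOnMul with
    | zero => exact fun h0 => absurd (Nat.eq_zero_of_zero_dvd h0) hn
    | one => exact fun _ => rfl
    | prime p hp => exact fun hpn => ((Nat.modEq_iff_dvd' hp.one_le).mpr (hM p hp hpn)).symm
    | mul a b iha ihb =>
      intro hab
      simpa using (iha (dvd_of_mul_right_dvd hab)).mul (ihb (dvd_of_mul_left_dvd hab))
  exact h ((Nat.modEq_iff_dvd' (Nat.one_le_iff_ne_zero.mpr hn)).mp (key n dvd_rfl).symm)

theorem ZMod.natCast_ne_one_of_coprime {m n p : ℕ} (hp : p ≠ 1) (hpn : p ∣ n)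
    (h : Nat.Coprime (m - 1) n) : (m : ZMod p) ≠ 1 := by
  intro hm
  have : p ∣ m - 1 := by
    rcases m with _ | m
    · exact dvd_zero p
    · simpa [ZMod.natCast_eq_zero_iff] using hm
  exact hp (Nat.eq_one_of_dvd_one (h ▸ Nat.dvd_gcd this hpn))

theorem pow_div_ne_one_of_orderOf_eq {G : Type*} [Monoid G] {x : G} {r k N : ℕ}
    (hx : orderOf x = r ^ (k + 1)) (hrN : r ∣ N) (hN : ¬ r ^ (k + 2) ∣ N) : x ^ (N / r) ≠ 1 :=
  fun h => hN <| by
    rw [pow_succ']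
    exact Nat.mul_dvd_of_dvd_div hrN (hx ▸ orderOf_dvd_of_pow_eq_one h)

theorem Nat.injective_pow_mul_pow {p q : ℕ} (hp : p.Prime) (hq : q ≠ 1)
    (hpow : ¬ ∃ m k : ℕ, 2 ≤ k ∧ p * q = m ^ k) :
    Function.Injective fun ij : ℕ × ℕ => q ^ ij.1 * p ^ ij.2 := by
  have hq0 : q ≠ 0 := by rintro rfl; exact hpow ⟨0, 2, le_rfl, by simp⟩
  have key {i j i' j' : ℕ} (hi : i < i') : q ^ i * p ^ j ≠ q ^ i' * p ^ j' := by
    intro h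
    rw [← Nat.add_sub_cancel' hi.le, pow_add, mul_assoc] at h
    have hdvd : q ∣ p ^ j := by
      rw [Nat.eq_of_mul_eq_mul_left (pow_pos (Nat.pos_of_ne_zero hq0) i) h]
      exact (dvd_pow_self q (Nat.sub_ne_zero_of_lt hi)).mul_right _
    obtain ⟨m, -, rfl⟩ := (Nat.dvd_prime_pow hp).mp hdvd
    have hm : m ≠ 0 := by rintro rfl; exact hq (pow_zero p)
    exact hpow ⟨p, m + 1, by omega, by rw [pow_succ']⟩
  rintro ⟨i, j⟩ ⟨i', j'⟩ h
  simp only at h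
  rcases lt_trichotomy i i' with hi | rfl | hi
  · exact absurd h (key hi)
  · have := Nat.pow_right_injective hp.two_le
      (Nat.eq_of_mul_eq_mul_left (pow_pos (Nat.pos_of_ne_zero hq0) i) h)
    rw [this]
  · exact absurd h.symm (key hi)

theorem Nat.Prime.sqrt_sq_lt {r : ℕ} (hr : r.Prime) : r.sqrt ^ 2 < r :=
  (Nat.sqrt_le' r).lt_of_ne fun h => hr.prime.not_isSquare ⟨r.sqrt, by rw [← sq, h]⟩

theorem pow_lt_two_pow_of_logb_sq_le {n r B : ℕ} (hn : 0 < n) (hB : B ^ 2 < r)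
    (h : Real.logb 2 n ^ 2 ≤ r) : n ^ B < 2 ^ r := by
  set L := Real.logb 2 n
  have hL : 0 ≤ L := Real.logb_nonneg one_lt_two (by exact_mod_cast hn)
  have hBr : (B : ℝ) ^ 2 < r := by exact_mod_cast hB
  have hBL : B * L < r := by
    refine lt_of_pow_lt_pow_left₀ 2 (Nat.cast_nonneg r) ?_
    rw [mul_pow]
    nlinarith [sq_nonneg (B : ℝ), sq_nonneg L]
  have hnL : (n : ℝ) = 2 ^ L := (Real.rpow_logb two_pos (by norm_num) (by exact_mod_cast hn)).symm
  have : ((n ^ B : ℕ) : ℝ) < ((2 ^ r : ℕ) : ℝ) := by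
    rw [Nat.cast_pow, Nat.cast_pow, Nat.cast_ofNat, hnL, ← Real.rpow_natCast,
      ← Real.rpow_mul zero_le_two, ← Real.rpow_natCast (2 : ℝ) r]
    exact Real.rpow_lt_rpow_of_exponent_lt one_lt_two (by linarith)
  exact_mod_cast this

theorem pow_pow_eq_self {M : Type*} [Monoid M] {x : M} {m : ℕ} (h : x ^ m = x) (i : ℕ) :
    x ^ m ^ i = x := by
  induction i with
  | zero => simp
  | succ i ih => rw [pow_succ, pow_mul, ih, h]

theorem pow_pow_eq_pow_sub_one_pow_mul {M : Type*} [CommMonoid M] {x : M} {p : ℕ} (hp : 1 ≤ p)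
    (hx : (x ^ (p - 1)) ^ (p - 1) = 1) (k : ℕ) : x ^ p ^ k = (x ^ (p - 1)) ^ k * x := by
  set y := x ^ (p - 1)
  have hxp : x ^ p = y * x := by rw [← pow_succ, Nat.sub_add_cancel hp]
  have hyp : y ^ p = y := by rw [← Nat.sub_add_cancel hp, pow_succ, hx, one_mul]
  induction k with
  | zero => simp
  | succ k ih => rw [pow_succ, pow_mul, ih, mul_pow, ← pow_mul, mul_comm k, pow_mul, hyp, hxp,
      ← mul_assoc, ← pow_succ]

theorem Finset.card_le_of_pow_eq_one {M : Type*} [Monoid M] [DecidableEq M] {x : M} {e : ℕ}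
    (he : 0 < e) (hx : x ^ e = 1) {s : Finset M} (hs : ∀ y ∈ s, ∃ k, x ^ k = y) : s.card ≤ e := by
  refine (Finset.card_le_card fun y hy => ?_).trans
    ((Finset.card_image_le (s := Finset.range e) (f := (x ^ ·))).trans_eq (Finset.card_range e))
  obtain ⟨k, rfl⟩ := hs y hy
  refine Finset.mem_image.mpr ⟨k % e, Finset.mem_range.mpr (Nat.mod_lt k he), ?_⟩
  conv_rhs => rw [← Nat.mod_add_div k e, pow_add, pow_mul, hx, one_pow, mul_one]

theorem Finset.exists_ne_map_eq_of_pow_eq {K ι : Type*} [CommRing K] [IsDomain K] {r : ℕ}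
    (hr : 0 < r) {c : K} {s : Finset ι} (hs : r < s.card) {y : ι → K}
    (hy : ∀ i ∈ s, y i ^ r = c) : ∃ i ∈ s, ∃ j ∈ s, i ≠ j ∧ y i = y j := by
  classical
  exact Finset.exists_ne_map_eq_of_card_lt_of_maps_to
    ((Multiset.toFinset_card_le _).trans_lt ((card_nthRoots r c).trans_lt hs))
    fun i hi => by simpa [mem_nthRoots hr] using hy i hi

section Introspective

variable {R : Type*} [CommRing R]

def IsIntrospective (f : R[X]) (m : ℕ) : Prop :=
  f ∣ (1 + X) ^ m - (1 + X ^ m)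

theorem isIntrospective_iff_one_add_root_pow {f : R[X]} {m : ℕ} :
    IsIntrospective f m ↔ (1 + AdjoinRoot.root f) ^ m = 1 + AdjoinRoot.root f ^ m := by
  rw [IsIntrospective, ← AdjoinRoot.mk_eq_mk]
  simp only [map_pow, map_add, map_one, AdjoinRoot.mk_X]

theorem IsIntrospective.mul {f : R[X]} {m m' : ℕ} (hf : f ∣ f.comp (X ^ m))
    (h : IsIntrospective f m) (h' : IsIntrospective f m') : IsIntrospective f (m * m') := by
  have h₁ : f ∣ ((1 + X) ^ m) ^ m' - (1 + X ^ m) ^ m' :=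
    h.trans (sub_dvd_pow_sub_pow _ _ _)
  have h₂ : f ∣ (1 + X ^ m) ^ m' - (1 + (X ^ m) ^ m') := by
    simpa using hf.trans (map_dvd (compRingHom (X ^ m)) h')
  unfold IsIntrospective
  convert dvd_add h₁ h₂ using 1
  ring

theorem IsIntrospective.pow {f : R[X]} {m : ℕ} (hf : f ∣ f.comp (X ^ m))
    (h : IsIntrospective f m) (i : ℕ) : IsIntrospective f (m ^ i) := by
  induction i with
  | zero => simp [IsIntrospective]
  | succ i ih => rw [pow_succ']; exact h.mul hf ih

theorem isIntrospective_char (p : ℕ) [Fact p.Prime] [CharP R p] (f : R[X]) :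
    IsIntrospective f p := by
  simp [IsIntrospective, add_pow_char]

theorem IsIntrospective.of_mul_char {p : ℕ} [Fact p.Prime] [CharP R p] {f : R[X]} (hf : Prime f)
    {q : ℕ} (h : IsIntrospective f (q * p)) : IsIntrospective f q := by
  have : (1 + X : R[X]) ^ (q * p) - (1 + X ^ (q * p)) = ((1 + X) ^ q - (1 + X ^ q)) ^ p := by
    rw [pow_mul, pow_mul, sub_pow_char (p := p), add_pow_char (p := p), one_pow]
  rw [IsIntrospective, this] at h
  exact hf.dvd_of_dvd_pow h

theorem IsIntrospective.map {S : Type*} [CommRing S] (φ : R →+* S) {f : R[X]} {m : ℕ}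
    (h : IsIntrospective f m) : IsIntrospective (f.map φ) m := by
  simpa [IsIntrospective] using Polynomial.map_dvd φ h

theorem X_pow_sub_C_dvd_comp_X_pow {r m : ℕ} {b : R} (h : b ^ m = b) :
    X ^ r - C b ∣ (X ^ r - C b).comp (X ^ m) := by
  have : (X ^ r - C b).comp (X ^ m) = (X ^ r) ^ m - C b ^ m := by
    rw [← C_pow, h, sub_comp, pow_comp, X_comp, C_comp, ← pow_mul, ← pow_mul, mul_comm]
  rw [this]
  exact sub_dvd_pow_sub_pow _ _ _

theorem isIntrospective_X_pow_sub_C_pow_mul_pow {r q p : ℕ} {b : R} (hbq : b ^ q = b)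
    (hbp : b ^ p = b) (hq : IsIntrospective (X ^ r - C b) q)
    (hp : IsIntrospective (X ^ r - C b) p) (i j : ℕ) :
    IsIntrospective (X ^ r - C b) (q ^ i * p ^ j) :=
  (hq.pow (X_pow_sub_C_dvd_comp_X_pow hbq) i).mul
    (X_pow_sub_C_dvd_comp_X_pow (pow_pow_eq_self hbq i))
    (hp.pow (X_pow_sub_C_dvd_comp_X_pow hbp) j)

end Introspective

theorem FiniteField.pow_ne_of_pow_div_ne_one {K : Type*} [Field K] [Fintype K] {r : ℕ} {b : K}
    (hb : b ≠ 0) (hr : r ∣ Fintype.card K - 1) (hz : b ^ ((Fintype.card K - 1) / r) ≠ 1)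
    (c : K) : c ^ r ≠ b := by
  rintro rfl
  refine hz ?_
  rw [← pow_mul, Nat.mul_div_cancel' hr, FiniteField.pow_card_sub_one_eq_one c ?_]
  rintro rfl
  rcases r.eq_zero_or_pos with rfl | hr0
  · simp at hz
  · simp [zero_pow hr0.ne'] at hb

instance AdjoinRoot.charP_of_irreducible {F : Type*} [Field F] {p : ℕ} [CharP F p] {f : F[X]}
    [Fact (Irreducible f)] : CharP (AdjoinRoot f) p :=
  charP_of_injective_algebraMap (algebraMap F _).injective p

theorem one_add_root_X_pow_sub_C_ne_zero {F : Type*} [Field F] {r : ℕ} (hr : 1 < r) (b : F) :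
    1 + AdjoinRoot.root (X ^ r - C b) ≠ 0 := by
  have h := AdjoinRoot.mk_ne_zero_of_natDegree_lt (monic_X_pow_sub_C b (n := r) (by omega))
    (g := 1 + X) (by simpa using congrArg (eval 0) ·) (by
      rwa [natDegree_X_pow_sub_C, add_comm, ← C_1, natDegree_X_add_C])
  simpa using h

theorem Polynomial.injective_prod_one_add_C_mul_X {F ι : Type*} [Field F] {c : ι → F}
    (hc : Function.Injective c) (hc0 : ∀ i, c i ≠ 0) :
    Function.Injective fun S : Finset ι => ∏ i ∈ S, (1 + C (c i) * X) := by
  have hroots (S : Finset ι) :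
      (∏ i ∈ S, (1 + C (c i) * X)).roots = S.val.map fun i => -(c i)⁻¹ := by
    have hlin (i : ι) : (1 + C (c i) * X : F[X]) = C (c i) * X + C 1 := by
      rw [C_1, add_comm]
    rw [roots_prod _ _ <| Finset.prod_ne_zero_iff.mpr fun i _ h => by
      simpa using congrArg (eval 0) h]
    simp_rw [hlin, roots_C_mul_X_add_C _ (hc0 _), mul_one]
    exact Multiset.bind_singleton _ _
  have hinj : Function.Injective fun i => -(c i)⁻¹ := fun i j hij => hc (by simpa using hij)
  intro S T hST
  refine Finset.val_injective (Multiset.map_injective hinj ?_)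
  rw [← hroots, ← hroots]
  exact congrArg roots hST

theorem AdjoinRoot.injOn_prod_one_add_mul_root {F ι : Type*} [Field F] {f : F[X]} {c : ι → F}
    (hc : Function.Injective c) (hc0 : ∀ i, c i ≠ 0) :
    Set.InjOn (fun S : Finset ι => ∏ i ∈ S, (1 + algebraMap F (AdjoinRoot f) (c i) * root f))
      {S | S.card < f.natDegree} := by
  set P : Finset ι → F[X] := fun S => ∏ i ∈ S, (1 + C (c i) * X)
  have hP (S : Finset ι) : (P S).natDegree ≤ S.card := by
    refine (natDegree_prod_le _ _).trans ?_
    exact (Finset.sum_le_card_nsmul S _ 1 fun i _ => by compute_degree).trans_eq (by simp)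
  have hmk (S : Finset ι) :
      mk f (P S) = ∏ i ∈ S, (1 + algebraMap F (AdjoinRoot f) (c i) * root f) := by
    simp [P, map_prod, AdjoinRoot.algebraMap_eq]
  intro S hS T hT hST
  simp only [← hmk] at hST
  refine Polynomial.injective_prod_one_add_C_mul_X hc hc0 (sub_eq_zero.mp ?_)
  refine eq_zero_of_dvd_of_degree_lt (AdjoinRoot.mk_eq_mk.mp hST) (degree_lt_degree ?_)
  exact (natDegree_sub_le _ _).trans_lt (max_lt ((hP S).trans_lt hS) ((hP T).trans_lt hT))

theorem one_add_root_X_pow_sub_C_pow_prime_pow {p r : ℕ} [Fact p.Prime] {b : ZMod p}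
    [Fact (Irreducible (X ^ r - C b))] (hb : b ≠ 0) (hrp : r ∣ p - 1) (k : ℕ) :
    (1 + AdjoinRoot.root (X ^ r - C b)) ^ p ^ k =
      1 + algebraMap (ZMod p) _ ((b ^ ((p - 1) / r)) ^ k) * AdjoinRoot.root (X ^ r - C b) := by
  have hθ : AdjoinRoot.root (X ^ r - C b) ^ (p - 1) =
      algebraMap (ZMod p) _ (b ^ ((p - 1) / r)) := by
    conv_lhs => rw [← Nat.mul_div_cancel' hrp]
    rw [pow_mul, root_X_pow_sub_C_pow, AdjoinRoot.algebraMap_eq, map_pow]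
  rw [add_pow_char_pow, one_pow, pow_pow_eq_pow_sub_one_pow_mul (Fact.out : p.Prime).one_le _ k,
    hθ, ← map_pow]
  rw [hθ, ← map_pow, ZMod.pow_card_sub_one_eq_one (pow_ne_zero _ hb), map_one]

theorem two_pow_sub_one_le_of_one_add_root_pow_eq_one {p r : ℕ} [Fact p.Prime] (hr : r.Prime)
    {b : ZMod p} [Fact (Irreducible (X ^ r - C b))] (hb : b ≠ 0) (hrp : r ∣ p - 1)
    (hz : b ^ ((p - 1) / r) ≠ 1) {e : ℕ} (he : 0 < e)
    (h : (1 + AdjoinRoot.root (X ^ r - C b)) ^ e = 1) : 2 ^ r - 1 ≤ e := by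
  have : Fact r.Prime := ⟨hr⟩
  set K := AdjoinRoot (X ^ r - C b)
  set θ : K := AdjoinRoot.root (X ^ r - C b)
  set z := b ^ ((p - 1) / r)
  have hz0 : z ≠ 0 := pow_ne_zero _ hb
  have hzr : orderOf z = r := orderOf_eq_prime
    (by rw [← pow_mul, Nat.div_mul_cancel hrp, ZMod.pow_card_sub_one_eq_one hb]) hz
  have hinj := AdjoinRoot.injOn_prod_one_add_mul_root (f := X ^ r - C b)
    (c := fun i : Fin r => z ^ (i : ℕ))
    (fun i j hij => Fin.ext (pow_injOn_Iio_orderOf (by simp [hzr]) (by simp [hzr]) hij))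
    (fun i => pow_ne_zero _ hz0)
  have hprod (S : Finset (Fin r)) :
      ∃ k, (1 + θ) ^ k = ∏ i ∈ S, (1 + algebraMap (ZMod p) K (z ^ (i : ℕ)) * θ) :=
    ⟨∑ i ∈ S, p ^ (i : ℕ), by
      rw [← Finset.prod_pow_eq_pow_sum]; exact Finset.prod_congr rfl fun i _ =>
        one_add_root_X_pow_sub_C_pow_prime_pow hb hrp i⟩
  have hproper : ((Finset.univ.erase Finset.univ : Finset (Finset (Fin r))) : Set _) ⊆
      {S : Finset (Fin r) | S.card < (X ^ r - C b : (ZMod p)[X]).natDegree} := fun S hS => by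
    simpa [natDegree_X_pow_sub_C] using
      (Finset.card_lt_iff_ne_univ S).mpr (Finset.ne_of_mem_erase (Finset.mem_coe.mp hS))
  classical
  calc 2 ^ r - 1 = ((Finset.univ.erase Finset.univ).image
        fun S : Finset (Fin r) => ∏ i ∈ S, (1 + algebraMap (ZMod p) K (z ^ (i : ℕ)) * θ)).card := by
        rw [Finset.card_image_of_injOn (hinj.mono hproper), Finset.card_erase_of_mem
          (Finset.mem_univ _), Finset.card_univ, Fintype.card_finset, Fintype.card_fin]
    _ ≤ e := Finset.card_le_of_pow_eq_one he h fun y hy => by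
        obtain ⟨S, -, rfl⟩ := Finset.mem_image.mp hy
        exact hprod S

theorem exists_lt_one_add_root_pow_eq {p q r : ℕ} [Fact p.Prime] (hr : r.Prime) (hq : q ≠ 1)
    (hpow : ¬ ∃ m k : ℕ, 2 ≤ k ∧ p * q = m ^ k) {b : ZMod p} [Fact (Irreducible (X ^ r - C b))]
    (hbq : b ^ q = b) (hintro : IsIntrospective (X ^ r - C b) q) :
    ∃ s t, 0 < s ∧ s < t ∧ t ≤ (p * q) ^ r.sqrt ∧
      (1 + AdjoinRoot.root (X ^ r - C b)) ^ s = (1 + AdjoinRoot.root (X ^ r - C b)) ^ t := by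
  have hp : p.Prime := Fact.out
  have hq0 : 0 < q := Nat.pos_of_ne_zero <| by rintro rfl; exact hpow ⟨0, 2, le_rfl, by simp⟩
  set θ := AdjoinRoot.root (X ^ r - C b)
  set B := r.sqrt
  have hbt (i j : ℕ) : b ^ (q ^ i * p ^ j) = b := by
    rw [pow_mul, pow_pow_eq_self hbq, pow_pow_eq_self (ZMod.pow_card b)]
  obtain ⟨⟨i₁, j₁⟩, h₁, ⟨i₂, j₂⟩, h₂, hne, heq⟩ := Finset.exists_ne_map_eq_of_pow_eq hr.pos
    (s := Finset.range (B + 1) ×ˢ Finset.range (B + 1)) (by simpa [← sq] using Nat.lt_succ_sqrt' r)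
    (y := fun ij => θ ^ (q ^ ij.1 * p ^ ij.2)) (c := algebraMap _ _ b) fun ij _ => by
      rw [← pow_mul, mul_comm, pow_mul, root_X_pow_sub_C_pow, ← map_pow, hbt]
      rfl
  simp only [Finset.mem_product, Finset.mem_range] at h₁ h₂
  have hpos (i j : ℕ) : 0 < q ^ i * p ^ j := Nat.mul_pos (pow_pos hq0 _) (pow_pos hp.pos _)
  have hle {i j : ℕ} (hi : i < B + 1) (hj : j < B + 1) : q ^ i * p ^ j ≤ (p * q) ^ B := by
    rw [mul_pow, mul_comm (p ^ B)]
    exact Nat.mul_le_mul (Nat.pow_le_pow_right hq0 (by omega))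
      (Nat.pow_le_pow_right hp.pos (by omega))
  have hθt (i j : ℕ) : (1 + θ) ^ (q ^ i * p ^ j) = 1 + θ ^ (q ^ i * p ^ j) :=
    isIntrospective_iff_one_add_root_pow.mp <| isIntrospective_X_pow_sub_C_pow_mul_pow hbq
      (ZMod.pow_card b) hintro (isIntrospective_char p _) i j
  have ht : (1 + θ) ^ (q ^ i₁ * p ^ j₁) = (1 + θ) ^ (q ^ i₂ * p ^ j₂) := by
    rw [hθt, hθt]
    exact congrArg _ heq
  rcases ((Nat.injective_pow_mul_pow hp hq hpow).ne hne).lt_or_gt with hlt | hlt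
  · exact ⟨_, _, hpos i₁ j₁, hlt, hle h₂.1 h₂.2, ht⟩
  · exact ⟨_, _, hpos i₂ j₂, hlt, hle h₁.1 h₁.2, ht.symm⟩

theorem eq_one_of_isIntrospective {p q r : ℕ} [Fact p.Prime] (hr : r.Prime)
    (hpow : ¬ ∃ m k : ℕ, 2 ≤ k ∧ p * q = m ^ k) (hbound : (p * q) ^ r.sqrt < 2 ^ r)
    {b : ZMod p} (hb : b ≠ 0) (hrp : r ∣ p - 1) (hz : b ^ ((p - 1) / r) ≠ 1)
    (hbn : b ^ (p * q) = b) (hn : IsIntrospective (X ^ r - C b) (p * q)) : q = 1 := by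
  by_contra hq
  have hirr : Irreducible (X ^ r - C b) := X_pow_sub_C_irreducible_of_prime hr
    (FiniteField.pow_ne_of_pow_div_ne_one hb (by rwa [ZMod.card]) (by rwa [ZMod.card]))
  have := Fact.mk hirr
  have hbq : b ^ q = b := by rwa [pow_mul, ZMod.pow_card] at hbn
  obtain ⟨s, t, hs, hst, ht, h⟩ := exists_lt_one_add_root_pow_eq hr hq hpow hbq
    ((mul_comm p q ▸ hn).of_mul_char hirr.prime)
  have hθ := one_add_root_X_pow_sub_C_ne_zero hr.one_lt b
  have := two_pow_sub_one_le_of_one_add_root_pow_eq_one hr hb hrp hz (Nat.sub_pos_of_lt hst)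
    (by rw [pow_sub₀ _ hθ hst.le, ← h, mul_inv_cancel₀ (pow_ne_zero _ hθ)])
  omega

theorem main_theorem_general (n r α a : ℕ) (hn : 0 < n)
    (hpow : ¬ ∃ m k : ℕ, 2 ≤ k ∧ n = m ^ k)
    (hr : r.Prime) (hα : 1 ≤ α)
    (hdvd : r ^ α ∣ n - 1) (hndvd : ¬ r ^ (α + 1) ∣ n - 1)
    (hrbig : (Real.logb 2 n) ^ 2 ≤ (r : ℝ))
    (hord : a ^ (r ^ α) ≡ 1 [MOD n])
    (hgcd : Nat.gcd (a ^ (r ^ (α - 1)) - 1) n = 1)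
    (hpoly : (1 + AdjoinRoot.root (X ^ r - C (a : ZMod n))) ^ n =
      1 + (AdjoinRoot.root (X ^ r - C (a : ZMod n))) ^ n) :
    n.Prime := by
  obtain ⟨k, rfl⟩ : ∃ k, α = k + 1 := ⟨α - 1, by omega⟩
  obtain ⟨p, hp, ⟨q, rfl⟩, hpr⟩ := Nat.exists_prime_dvd_not_dvd_sub_one hn.ne' hndvd
  have := Fact.mk hp
  have := Fact.mk hr
  have hb1 : (a : ZMod p) ^ r ^ (k + 1) = 1 := by
    simpa using (ZMod.natCast_eq_natCast_iff _ _ _).mpr (hord.of_dvd (dvd_mul_right p q))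
  have hbk : (a : ZMod p) ^ r ^ k ≠ 1 := by
    have := ZMod.natCast_ne_one_of_coprime hp.ne_one (dvd_mul_right p q) (by simpa using hgcd)
    exact_mod_cast this
  have hb0 : (a : ZMod p) ≠ 0 := by
    rintro h
    simp [h, zero_pow (pow_ne_zero _ hr.ne_zero)] at hb1
  have hb : orderOf (a : ZMod p) = r ^ (k + 1) := orderOf_eq_prime_pow hbk hb1
  have hrp : r ∣ p - 1 :=
    (dvd_pow_self r k.succ_ne_zero).trans (hb ▸ ZMod.orderOf_dvd_card_sub_one hb0)
  have hbn : (a : ZMod p) ^ (p * q) = a := by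
    obtain ⟨c, hc⟩ := hdvd
    rw [← Nat.sub_add_cancel hn, hc, pow_succ, pow_mul, hb1, one_pow, one_mul]
  have hintro : IsIntrospective (X ^ r - C (a : ZMod p)) (p * q) := by
    simpa using (isIntrospective_iff_one_add_root_pow.mpr hpoly).map
      (ZMod.castHom (dvd_mul_right p q) (ZMod p))
  have hq := eq_one_of_isIntrospective hr hpow
    (pow_lt_two_pow_of_logb_sq_le hn hr.sqrt_sq_lt hrbig) hb0 hrp
    (pow_div_ne_one_of_orderOf_eq hb hrp hpr) hbn hintro
  simpa [hq] using hp

theorem main_theorem (n r α a : ℕ) (hn : 0 < n)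
    (hpow : ¬ ∃ m k : ℕ, 2 ≤ k ∧ n = m ^ k)
    (hr : r.Prime) (hα : 1 ≤ α)
    (hdvd : r ^ α ∣ n - 1) (hndvd : ¬ r ^ (α + 1) ∣ n - 1)
    (hrbig : (Real.logb 2 n) ^ 2 ≤ (r : ℝ))
    (ha1 : 1 < a) (han : a < n)
    (hord : a ^ (r ^ α) ≡ 1 [MOD n])
    (hgcd : Nat.gcd (a ^ (r ^ (α - 1)) - 1) n = 1)
    (hpoly : (1 + AdjoinRoot.root (X ^ r - C (a : ZMod n))) ^ n =
      1 + (AdjoinRoot.root (X ^ r - C (a : ZMod n))) ^ n) :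
    n.Prime :=
  main_theorem_general n r α a hn hpow hr hα hdvd hndvd hrbig hord hgcd hpoly
end
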